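/- arXiv:math/0607363 — 4 statements merged into one kernel-verified Lean document; each statement's English description precedes it below -/
import Mathlib

section
/- If L is an invertible 1-dimensional K-rational lattice, then the commensurability class c(L) is in bijection with the set of nonzero ideals J ⊆ A, via J ↦ J^{-1}L; explicitly, every lattice commensurable to L = (sR∩K, ρ) with ρ ∈ R^* is of the form (s'=su, ρ'=ρu) mod K^* for a unique u ∈ R ∩ A_{K,f}^*, corresponding to the ideal J = Ru ∩ K. -/
/-! The condition `ρ' = ρu` forces `u = ρ⁻¹ρ'`, which lies in `R` because `ρ⁻¹` does, and
commensurability says this `u` is `s⁻¹s'r` with `r ∈ Kˣ`. -/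

theorem Units.eq_mul_of_mul_inv_eq_mul_mul_inv {M : Type*} [CommMonoid M] {a : M} {r b s t : Mˣ}
    (h : a * ↑t⁻¹ = ↑r * (↑b * ↑s⁻¹)) : a = ↑b * ↑(s⁻¹ * t * r) := by
  rw [(Units.mul_inv_eq_iff_eq_mul _).mp h]
  push_cast
  ac_rfl

theorem stmt9_general {A : Type*} [CommRing A] (R : Subring A) (Kstar : Subgroup Aˣ)
    (ρ s : Aˣ) (hρi : ((ρ⁻¹ : Aˣ) : A) ∈ R)
    (ρ' : A) (hρ' : ρ' ∈ R) (s' : Aˣ)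
    (hcomm : ∃ r ∈ Kstar,
      ρ' * ((s'⁻¹ : Aˣ) : A) = ((r : Aˣ) : A) * (((ρ : Aˣ) : A) * ((s⁻¹ : Aˣ) : A))) :
    ∃! u : Aˣ, ((u : Aˣ) : A) ∈ R ∧ ρ' = ((ρ : Aˣ) : A) * ((u : Aˣ) : A) ∧
      ∃ r ∈ Kstar, s' = s * u * r := by
  obtain ⟨r, hr, hc⟩ := hcomm
  have hρ'_eq := Units.eq_mul_of_mul_inv_eq_mul_mul_inv hc
  refine ⟨s⁻¹ * s' * r, ⟨?_, hρ'_eq, r⁻¹, Kstar.inv_mem hr, by group⟩, ?_⟩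
  · rw [(Units.eq_inv_mul_iff_mul_eq _).mpr hρ'_eq.symm]
    exact R.mul_mem hρi hρ'
  · rintro u ⟨-, hu, -⟩
    exact Units.ext ((Units.mul_right_inj ρ).mp (hu.symm.trans hρ'_eq))

/-- The commensurability class of an invertible 1-dimensional K-rational lattice is
in bijection with the set of nonzero ideals of `A`.  Adelic model: `A` is the ring
of finite adeles `A_{K,f}`, `R ⊆ A` the finite integral adeles, `Kstar ≤ Aˣ` the
subgroup `Kˣ`.  The invertible lattice `L` is given by `(s, ρ)` with `ρ ∈ Rˣ`
(i.e. `ρ, ρ⁻¹ ∈ R`); a lattice `(s', ρ')` (with `ρ' ∈ R`) is commensurable to `L`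
iff `ρ's'⁻¹ = r·ρs⁻¹` for some `r ∈ Kˣ`.  Then there is a unique `u ∈ R ∩ A_{K,f}ˣ`
(corresponding to the ideal `J = Ru ∩ K`, so that the lattice is `J⁻¹L`) with
`ρ' = ρu` and `s' = su mod Kˣ`. -/
theorem stmt9 {A : Type*} [CommRing A] (R : Subring A) (Kstar : Subgroup Aˣ)
    (ρ s : Aˣ) (hρ : ((ρ : Aˣ) : A) ∈ R) (hρi : ((ρ⁻¹ : Aˣ) : A) ∈ R)
    (ρ' : A) (hρ' : ρ' ∈ R) (s' : Aˣ)
    (hcomm : ∃ r ∈ Kstar,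
      ρ' * ((s'⁻¹ : Aˣ) : A) = ((r : Aˣ) : A) * (((ρ : Aˣ) : A) * ((s⁻¹ : Aˣ) : A))) :
    ∃! u : Aˣ, ((u : Aˣ) : A) ∈ R ∧ ρ' = ((ρ : Aˣ) : A) * ((u : Aˣ) : A) ∧
      ∃ r ∈ Kstar, s' = s * u * r :=
  stmt9_general R Kstar ρ s hρi ρ' hρ' s' hcomm
end

section
/- For an invertible K-rational lattice L and x ∈ C_∞^* with |x|_∞ > q, the functional φ_{x,L}(f) = Z(x)^{-1}·∑_{J⊆A} f(J^{-1}L, J^{-1}L)·J^{-x} on the convolution algebra A(L_{K,1}) satisfies the KMS_x condition φ_{x,L}(f₁ * σ_x(f₂)) = φ_{x,L}(f₂ * f₁) for all f₁, f₂, where Z(x) = ∑_{J⊆A} J^{-x}. -/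
/-- KMS_x property of the functionals associated to invertible K-rational lattices.
Model: the commensurability class of the invertible lattice `L` is identified with
the set `ι` of nonzero ideals `J ⊆ A` (via `J ↦ J⁻¹L`), with degree function
`deg : ι → ℕ`; `J^x = x^{deg J}` for `x ∈ C_∞ˣ` and `J^{-x} = (x^{deg J})⁻¹`.
Elements of the convolution algebra are compactly (finitely) supported functions on
pairs of commensurable lattices, `f : ι → ι → C`.  The time evolution at inverse
temperature `x` multiplies `f(J''⁻¹L, J⁻¹L)` by `I^x/J'^x = x^{deg J}/x^{deg J''}`.
The functional `φ_{x,L}(f) = Z(x)⁻¹ ∑_J f(J⁻¹L, J⁻¹L) J^{-x}` with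
`Z(x) = ∑_J J^{-x}` (convergent for `|x|_∞ > q`, assumed nonzero) satisfies
`φ_{x,L}(f₁ * σ_x(f₂)) = φ_{x,L}(f₂ * f₁)`. -/
theorem stmt10 {C ι : Type*} [NormedField C] [CompleteSpace C]
    (deg : ι → ℕ) (q : ℝ) (hq : 1 < q)
    (hcount : ∀ d : ℕ, Set.Finite {J : ι | deg J = d})
    (x : Cˣ) (hx : q < ‖(x : C)‖)
    (hZ : (∑' J : ι, (((x : C) ^ deg J)⁻¹)) ≠ 0)
    (f₁ f₂ : ι → ι → C)
    (h₁ : Set.Finite {p : ι × ι | f₁ p.1 p.2 ≠ 0})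
    (h₂ : Set.Finite {p : ι × ι | f₂ p.1 p.2 ≠ 0}) :
    (∑' J : ι, ((x : C) ^ deg J)⁻¹)⁻¹ *
        (∑' J : ι, (∑' J'' : ι,
            f₁ J J'' * ((((x : C) ^ deg J) / ((x : C) ^ deg J'')) * f₂ J'' J)) *
          ((x : C) ^ deg J)⁻¹)
      = (∑' J : ι, ((x : C) ^ deg J)⁻¹)⁻¹ *
        (∑' J : ι, (∑' J'' : ι, f₂ J J'' * f₁ J'' J) * ((x : C) ^ deg J)⁻¹) := by
  classical
  congr 1
  have hx0 : (x : C) ≠ 0 := x.ne_zero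
  set S₁ := h₁.toFinset with hS₁
  set S₂ := h₂.toFinset with hS₂
  set A : Finset ι := S₁.image Prod.fst ∪ S₂.image Prod.snd with hA
  set B : Finset ι := S₁.image Prod.snd ∪ S₂.image Prod.fst with hB
  have hmem₁ : ∀ {J J'' : ι}, f₁ J J'' ≠ 0 → J ∈ A ∧ J'' ∈ B := by
    intro J J'' h
    have hm : (J, J'') ∈ S₁ := h₁.mem_toFinset.2 h
    exact ⟨Finset.mem_union_left _ (Finset.mem_image.2 ⟨(J, J''), hm, rfl⟩),
      Finset.mem_union_left _ (Finset.mem_image.2 ⟨(J, J''), hm, rfl⟩)⟩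
  have hmem₂ : ∀ {J J'' : ι}, f₂ J J'' ≠ 0 → J ∈ B ∧ J'' ∈ A := by
    intro J J'' h
    have hm : (J, J'') ∈ S₂ := h₂.mem_toFinset.2 h
    exact ⟨Finset.mem_union_right _ (Finset.mem_image.2 ⟨(J, J''), hm, rfl⟩),
      Finset.mem_union_right _ (Finset.mem_image.2 ⟨(J, J''), hm, rfl⟩)⟩
  have inner₁ : ∀ J : ι,
      (∑' J'' : ι, f₁ J J'' * ((((x : C) ^ deg J) / ((x : C) ^ deg J'')) * f₂ J'' J))
        = ∑ J'' ∈ B, f₁ J J'' * ((((x : C) ^ deg J) / ((x : C) ^ deg J'')) * f₂ J'' J) := by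
    intro J
    refine tsum_eq_sum fun J'' hJ'' => ?_
    have : f₁ J J'' = 0 := by
      by_contra h; exact hJ'' (hmem₁ h).2
    simp [this]
  have inner₂ : ∀ J : ι,
      (∑' J'' : ι, f₂ J J'' * f₁ J'' J) = ∑ J'' ∈ A, f₂ J J'' * f₁ J'' J := by
    intro J
    refine tsum_eq_sum fun J'' hJ'' => ?_
    have : f₂ J J'' = 0 := by
      by_contra h; exact hJ'' (hmem₂ h).2
    simp [this]
  simp only [inner₁, inner₂]
  have outer₁ :
      (∑' J : ι, (∑ J'' ∈ B, f₁ J J'' * ((((x : C) ^ deg J) / ((x : C) ^ deg J'')) * f₂ J'' J))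
          * ((x : C) ^ deg J)⁻¹)
        = ∑ J ∈ A, (∑ J'' ∈ B, f₁ J J'' * ((((x : C) ^ deg J) / ((x : C) ^ deg J'')) * f₂ J'' J))
          * ((x : C) ^ deg J)⁻¹ := by
    refine tsum_eq_sum fun J hJ => ?_
    have : ∀ J'' ∈ B, f₁ J J'' * ((((x : C) ^ deg J) / ((x : C) ^ deg J'')) * f₂ J'' J) = 0 := by
      intro J'' _
      have : f₁ J J'' = 0 := by
        by_contra h; exact hJ (hmem₁ h).1
      simp [this]
    rw [Finset.sum_eq_zero this, zero_mul]
  have outer₂ :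
      (∑' J : ι, (∑ J'' ∈ A, f₂ J J'' * f₁ J'' J) * ((x : C) ^ deg J)⁻¹)
        = ∑ J ∈ B, (∑ J'' ∈ A, f₂ J J'' * f₁ J'' J) * ((x : C) ^ deg J)⁻¹ := by
    refine tsum_eq_sum fun J hJ => ?_
    have : ∀ J'' ∈ A, f₂ J J'' * f₁ J'' J = 0 := by
      intro J'' _
      have : f₂ J J'' = 0 := by
        by_contra h; exact hJ (hmem₂ h).1
      simp [this]
    rw [Finset.sum_eq_zero this, zero_mul]
  rw [outer₁, outer₂]
  simp only [Finset.sum_mul]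
  rw [Finset.sum_comm]
  refine Finset.sum_congr rfl fun J'' _ => Finset.sum_congr rfl fun J _ => ?_
  have h1 : ((x : C) ^ deg J) ≠ 0 := pow_ne_zero _ hx0
  have h2 : ((x : C) ^ deg J'') ≠ 0 := pow_ne_zero _ hx0
  field_simp
end

section
/- Inner symmetries act trivially on KMS_x functionals: if u ∈ A has left inverse v (vu = 1), σ_s(u) = λ^s·u for all s (hence σ_s(v) = λ^{-s}·v), U(f) = u·f·v, and φ is a KMS_x functional (i.e. φ(f₁σ_x(f₂)) = φ(f₂f₁) for all f₁, f₂), then φ(U(1)) = λ^x ≠ 0 and φ(U(f))/φ(U(1)) = φ(f) for all f ∈ A. -/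
/-- Inner symmetries act trivially on KMS_x functionals.  `A` is a unital algebra
over a field `L`, `σ : S → Aut(A)` a family of algebra automorphisms indexed by a
group `S` with `σ_{s+t} = σ_s∘σ_t`, `u ∈ A` with left inverse `v` (`vu = 1`),
`σ_s(u) = λ^s·u` for a multiplicative family `λ^s ∈ Lˣ`, and `φ` a KMS_x functional:
`φ` linear, `φ(1) = 1`, `φ(f₁·σ_x(f₂)) = φ(f₂·f₁)`.  Then `φ(U(1)) = φ(uv) = λ^x ≠ 0`
and `φ(U(f))/φ(U(1)) = φ(f)` for all `f`, where `U(f) = u·f·v`. -/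
theorem stmt11 {L : Type*} [Field L] {A : Type*} [Ring A] [Algebra L A]
    {S : Type*} [AddCommGroup S]
    (σ : S → (A →ₐ[L] A)) (hσ : ∀ (s t : S) (a : A), σ (s + t) a = σ s (σ t a))
    (hσbij : ∀ s : S, Function.Bijective (σ s))
    (u v : A) (hvu : v * u = 1)
    (lam : S → Lˣ) (hlam : ∀ s t : S, lam (s + t) = lam s * lam t)
    (hu : ∀ s : S, σ s u = ((lam s : L)) • u)
    (x : S) (φ : A →ₗ[L] L) (hφ1 : φ 1 = 1)
    (hKMS : ∀ f₁ f₂ : A, φ (f₁ * σ x f₂) = φ (f₂ * f₁)) :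
    φ (u * 1 * v) = (lam x : L) ∧ φ (u * 1 * v) ≠ 0 ∧
      ∀ f : A, φ (u * f * v) / φ (u * 1 * v) = φ f := by
  -- σ 0 = id
  have h0 : ∀ a : A, σ 0 a = a := by
    intro a
    have := hσ 0 0 a
    rw [add_zero] at this
    exact ((hσbij 0).1 this.symm)
  -- σ x (σ (-x) a) = a
  have hxinv : ∀ a : A, σ x (σ (-x) a) = a := by
    intro a
    rw [← hσ, add_neg_cancel, h0]
  have hinvx : ∀ a : A, σ (-x) (σ x a) = a := by
    intro a
    rw [← hσ, neg_add_cancel, h0]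
  -- key: σ(-x)(v) * u = (lam x) • 1
  have hkey : σ (-x) v * u = (lam x : L) • 1 := by
    have : σ (-x) v * u = σ (-x) (v * σ x u) := by
      rw [map_mul, hinvx]
    rw [this, hu x, mul_smul_comm, hvu, map_smul, map_one]
  -- φ (u * f * v) = (lam x) * φ f
  have hmain : ∀ f : A, φ (u * f * v) = (lam x : L) * φ f := by
    intro f
    have := hKMS (u * f) (σ (-x) v)
    rw [hxinv] at this
    rw [this, ← mul_assoc, hkey, smul_mul_assoc, one_mul, map_smul, smul_eq_mul]
  have h1 : φ (u * 1 * v) = (lam x : L) := by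
    rw [hmain 1, hφ1, mul_one]
  refine ⟨h1, by rw [h1]; exact (lam x).ne_zero, fun f => ?_⟩
  rw [h1, hmain f, mul_comm, mul_div_assoc, div_self (lam x).ne_zero, mul_one]
end

section
/- The element μ_J ∈ A(L_{K,1}) defined by μ_J(L, L') = 1 if L = L'_u and 0 otherwise (where u represents the ideal J) has a left inverse μ̃_J (given by μ̃_J(L,L') = 1 iff L' = L_u), i.e. μ̃_J * μ_J is the identity of the algebra on the relevant classes, and μ_J is an eigenvector of the time evolution: σ_s(μ_J) = J^s·μ_J for all s ∈ S_∞. -/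
/- The isometry `μ_J` and its left inverse, and the eigenvector property.
Model: `X` is the set of 1-dimensional K-rational lattices, `m : X → X` the
injective map `L_u ↦ L` (multiplication of the point by `u`, where `u` represents
the ideal `J`); `μ_J(L, L') = 1` iff `L = L'_u` (i.e. `m L = L'`), `μ̃_J(L, L') = 1`
iff `L' = L_u` (i.e. `m L' = L`); `E L s = I(L)^s` is ideal exponentiation with the
ideal of `L_u` differing from that of `L` by the factor `J`, i.e.
`E L s = J^s · E(m L) s` with `J^s = j s ∈ C_∞ˣ` (hypothesis `hj`).  Conclusions:
`μ̃_J * μ_J` is the identity of the convolution algebra on the relevant (divisible)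
classes, and `σ_s(μ_J) = J^s·μ_J` for all `s ∈ S_∞`. -/
open Classical in
theorem stmt19 {C X S : Type*} [NormedField C] [CompleteSpace C] [AddCommGroup S]
    (E : X → S → Cˣ) (m : X → X) (hm : Function.Injective m)
    (j : S → Cˣ) (hj : ∀ (L : X) (s : S), (E L s : C) = (j s : C) * (E (m L) s : C))
    (μ μt : X → X → C)
    (hμ : ∀ L L' : X, μ L L' = if m L = L' then 1 else 0)
    (hμt : ∀ L L' : X, μt L L' = if m L' = L then 1 else 0) :
    (∀ L L' : X, (∑' c : X, μt L c * μ c L')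
        = if L = L' ∧ L ∈ Set.range m then 1 else 0) ∧
    (∀ (s : S) (L L' : X),
        ((E L s : C) / (E L' s : C)) * μ L L' = (j s : C) * μ L L') := by
  constructor
  · intro L L'
    by_cases h : L = L' ∧ L ∈ Set.range m
    · obtain ⟨rfl, c₀, hc₀⟩ := h
      rw [if_pos ⟨rfl, c₀, hc₀⟩]
      rw [tsum_eq_single c₀]
      · simp [hμ, hμt, hc₀]
      · intro c hc
        have : m c ≠ L := fun h => hc (hm (h.trans hc₀.symm))
        simp [hμ, hμt, this]
    · rw [if_neg h]
      have : ∀ c : X, μt L c * μ c L' = 0 := by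
        intro c
        by_cases h1 : m c = L
        · have h2 : m c ≠ L' := fun h2 => h ⟨h1.symm.trans h2, c, h1⟩
          simp [hμ, hμt, h2]
        · simp [hμ, hμt, h1]
      simp [this]
  · intro s L L'
    by_cases h : m L = L'
    · subst h
      simp only [hμ, if_pos rfl, if_true, mul_one]
      rw [div_eq_iff (by exact_mod_cast (E (m L) s).ne_zero), ← hj L s]
    · simp [hμ, h]
end
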